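/- Let q ∈ ℂ[[t]] with q(0) = 1 and let φ be normalized and symmetric. Then the following are equivalent: (i) Π₊( ℰ(q,φ)·φ_z ) = 0; (ii) [ S_q(φ⁻,φ) ] = 1; (iii) Π( ℰ(q,φ)·φ_z̄ ) = 0. -/

import Mathlib

/- Common setup: formal power series in two commuting variables `z, z̄` over `ℂ`,
represented by their coefficient functions, together with the operators of
Treschev's linearizable billiard construction. -/

open scoped BigOperators

noncomputable section

namespace Treschev

/-- A formal power series `f = Σ_{j,k≥0} f_{j,k} z^j z̄^k`, given by its coefficients. -/
abbrev FPS : Type := ℕ → ℕ → ℂ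

/-- A formal power series in one variable `t`, given by its coefficients. -/
abbrev OPS : Type := ℕ → ℂ

/-- Product of two formal power series (Cauchy product). -/
def fmul (f g : FPS) : FPS := fun j k =>
  ∑ a ∈ Finset.range (j + 1), ∑ b ∈ Finset.range (k + 1), f a b * g (j - a) (k - b)

/-- The constant series `1`. -/
def oneF : FPS := fun j k => if j = 0 ∧ k = 0 then 1 else 0

/-- Powers of a formal power series. -/
def fpow (f : FPS) : ℕ → FPS
  | 0 => oneF
  | n + 1 => fmul f (fpow f n)

/-- Substitution of a two-variable series `u` with zero constant term into a
one-variable series `q` (the formula is the correct one whenever `u 0 0 = 0`). -/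
def substOne (q : OPS) (u : FPS) : FPS := fun j k =>
  ∑ m ∈ Finset.range (j + k + 1), q m * fpow u m j k

/-- Substitution `F(u, v)` of two series with zero constant term into a two-variable
series `F` (the formula is the correct one whenever `u 0 0 = 0` and `v 0 0 = 0`). -/
def subst2 (F : FPS) (u v : FPS) : FPS := fun j k =>
  ∑ m ∈ Finset.range (j + k + 1), ∑ n ∈ Finset.range (j + k + 1),
    F m n * fmul (fpow u m) (fpow v n) j k

/-- The Taylor series of `cos`. -/
def cosSeries : OPS := fun n => if n % 2 = 0 then (-1 : ℂ) ^ (n / 2) / (n.factorial : ℂ) else 0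

/-- `(t₁ + t₂)/2` as a two-variable series. -/
def halfSum : FPS := fun j k =>
  if j = 1 ∧ k = 0 then (1 / 2 : ℂ) else if j = 0 ∧ k = 1 then (1 / 2 : ℂ) else 0

/-- `(t₁ − t₂)/2` as a two-variable series. -/
def halfDiff : FPS := fun j k =>
  if j = 1 ∧ k = 0 then (1 / 2 : ℂ) else if j = 0 ∧ k = 1 then (-(1 / 2) : ℂ) else 0

/-- The generating function `S_q(t₁,t₂) = q((t₁+t₂)/2)·cos((t₁−t₂)/2)` as a
formal power series in `t₁, t₂`. -/
def Sq (q : OPS) : FPS := fmul (substOne q halfSum) (substOne cosSeries halfDiff)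

/-- Formal partial derivative with respect to the first variable. -/
def d1 (f : FPS) : FPS := fun j k => ((j + 1 : ℕ) : ℂ) * f (j + 1) k

/-- Formal partial derivative with respect to the second variable. -/
def d2 (f : FPS) : FPS := fun j k => ((k + 1 : ℕ) : ℂ) * f j (k + 1)

/-- `f⁺`, with `(f⁺)_{j,k} = λ^{j−k} f_{j,k}`. -/
def plus (l : ℂ) (f : FPS) : FPS := fun j k => l ^ ((j : ℤ) - (k : ℤ)) * f j k

/-- `f⁻`, with `(f⁻)_{j,k} = λ^{k−j} f_{j,k}`. -/
def minus (l : ℂ) (f : FPS) : FPS := fun j k => l ^ ((k : ℤ) - (j : ℤ)) * f j k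

/-- `∇f = f⁻ − λ⁻¹ f`. -/
def nab (l : ℂ) (f : FPS) : FPS := minus l f - l⁻¹ • f

/-- `∇⁺f = f − λ f⁺`. -/
def nabPlus (l : ℂ) (f : FPS) : FPS := f - l • plus l f

/-- The average `[f] = Σ_j f_{j,j} (z z̄)^j`. -/
def avg (f : FPS) : FPS := fun j k => if j = k then f j k else 0

/-- The projection `Π₊(f) = [z f]/z`. -/
def Pip (f : FPS) : FPS := fun j k => if k = j + 1 then f j k else 0

/-- The projection `Π(f) = [z̄ f]/z̄`. -/
def Pim (f : FPS) : FPS := fun j k => if j = k + 1 then f j k else 0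

/-- `E⁺`, the partial inverse of `∇⁺`. -/
def Eplus (l : ℂ) (f : FPS) : FPS := fun j k =>
  if k = j + 1 then 0 else f j k / (1 - l ^ ((j : ℤ) - (k : ℤ) + 1))

/-- `E`, the partial inverse of `∇`. -/
def Emin (l : ℂ) (f : FPS) : FPS := fun j k =>
  if j = k + 1 then 0 else f j k / (l ^ ((k : ℤ) - (j : ℤ)) - l⁻¹)

/-- `Ẽ`, with `Ẽ(f − f⁺) = f − [f]`. -/
def Etilde (l : ℂ) (f : FPS) : FPS := fun j k =>
  if j = k then 0 else f j k / (1 - l ^ ((j : ℤ) - (k : ℤ)))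

/-- `f ∘ I`, where `I(z,z̄) = (z̄,z)`. -/
def swapI (f : FPS) : FPS := fun j k => f k j

/-- Multiplication by `z`. -/
def mulz (f : FPS) : FPS := fun j k => if j = 0 then 0 else f (j - 1) k

/-- Multiplication by `z̄`. -/
def mulzbar (f : FPS) : FPS := fun j k => if k = 0 then 0 else f j (k - 1)

/-- Division by `z` (valid on series divisible by `z`). -/
def divz (f : FPS) : FPS := fun j k => f (j + 1) k

/-- Multiplicative inverse `1/h` (the geometric-series formula, which is the correct
inverse whenever `h 0 0 ≠ 0`). -/
def finv (h : FPS) : FPS := fun j k =>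
  (h 0 0)⁻¹ * ∑ m ∈ Finset.range (j + k + 1),
    fpow (fun a b => if a = 0 ∧ b = 0 then 0 else -(h a b) * (h 0 0)⁻¹) m j k

/-- Quotient `f/h` of formal power series. -/
def fdiv (f h : FPS) : FPS := fmul f (finv h)

/-- `ℰ(q,φ) = ∂₂S_q(φ⁻,φ) + ∂₁S_q(φ,φ⁺)`. -/
def Err (l : ℂ) (q : OPS) (φ : FPS) : FPS :=
  subst2 (d2 (Sq q)) (minus l φ) φ + subst2 (d1 (Sq q)) φ (plus l φ)

/-- `∂_φℰ(q,φ)(w) = ∂₁₂S_q(φ⁻,φ)w⁻ + ∂₂₂S_q(φ⁻,φ)w + ∂₁₁S_q(φ,φ⁺)w + ∂₁₂S_q(φ,φ⁺)w⁺`. -/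
def dErr (l : ℂ) (q : OPS) (φ : FPS) (w : FPS) : FPS :=
  fmul (subst2 (d1 (d2 (Sq q))) (minus l φ) φ) (minus l w)
    + fmul (subst2 (d2 (d2 (Sq q))) (minus l φ) φ) w
    + fmul (subst2 (d1 (d1 (Sq q))) φ (plus l φ)) w
    + fmul (subst2 (d1 (d2 (Sq q))) φ (plus l φ)) (plus l w)

/-- `h = ∂₁₂S_q(φ⁻,φ)·φ_z·φ_z⁻`. -/
def hFun (l : ℂ) (q : OPS) (φ : FPS) : FPS :=
  fmul (fmul (subst2 (d1 (d2 (Sq q))) (minus l φ) φ) (d1 φ)) (minus l (d1 φ))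

/-- `ψ = −E⁺( ℰ(q,φ)·φ_z − Π₊(ℰ(q,φ)·φ_z) )`. -/
def psiFun (l : ℂ) (q : OPS) (φ : FPS) : FPS :=
  -Eplus l (fmul (Err l q φ) (d1 φ) - Pip (fmul (Err l q φ) (d1 φ)))

/-- `w = φ_z·E( ψ/h − Π(ψ/h) )`. -/
def wFun (l : ℂ) (q : OPS) (φ : FPS) : FPS :=
  fmul (d1 φ)
    (Emin l (fdiv (psiFun l q φ) (hFun l q φ) - Pim (fdiv (psiFun l q φ) (hFun l q φ))))

/-- `κ = ∂₁₂S_q(φ⁻,φ)·(λ⁻¹ φ_z⁻ φ_z̄ − λ φ_z̄⁻ φ_z)`. -/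
def kappaFun (l : ℂ) (q : OPS) (φ : FPS) : FPS :=
  fmul (subst2 (d1 (d2 (Sq q))) (minus l φ) φ)
    (l⁻¹ • fmul (minus l (d1 φ)) (d2 φ) - l • fmul (minus l (d2 φ)) (d1 φ))

/-- `g = φ_z̄ / φ_z`. -/
def gFun (φ : FPS) : FPS := fdiv (d2 φ) (d1 φ)

/-- `R₁ = ( −[z̄·ℰ·φ_z̄] + [z̄·g·[z·ℰ·φ_z]/z] ) / ( λ·z·[κ] )`. -/
def R1Fun (l : ℂ) (q : OPS) (φ : FPS) : FPS :=
  l⁻¹ • fmul (finv (avg (kappaFun l q φ)))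
    (divz (-avg (mulzbar (fmul (Err l q φ) (d2 φ)))
      + avg (mulzbar (fmul (gFun φ) (divz (avg (mulz (fmul (Err l q φ) (d1 φ)))))))))

/-- `R₂ = (1/z)·[ z̄·ψ·(λ⁻¹g − λg⁻)·([κ]−κ)/(κ·[κ]) ]`. -/
def R2Fun (l : ℂ) (q : OPS) (φ : FPS) : FPS :=
  divz (avg (mulzbar
    (fmul (fmul (psiFun l q φ) (l⁻¹ • gFun φ - l • minus l (gFun φ)))
      (fmul (avg (kappaFun l q φ) - kappaFun l q φ)
        (finv (fmul (kappaFun l q φ) (avg (kappaFun l q φ))))))))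

/-- `R₃ = [z·∂_z(S_q(φ⁻,φ))]/z − ∇⁺( h·Π(ψ/h) )`. -/
def R3Fun (l : ℂ) (q : OPS) (φ : FPS) : FPS :=
  Pip (d1 (subst2 (Sq q) (minus l φ) φ))
    - nabPlus l (fmul (hFun l q φ) (Pim (fdiv (psiFun l q φ) (hFun l q φ))))

/-- `R₄ = ∂_z(ℰ(q,φ))·(w/φ_z) + R₃/φ_z`. -/
def R4Fun (l : ℂ) (q : OPS) (φ : FPS) : FPS :=
  fmul (d1 (Err l q φ)) (fdiv (wFun l q φ) (d1 φ)) + fdiv (R3Fun l q φ) (d1 φ)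

/-- `φ = z + z̄ + O₃`. -/
def normalized (φ : FPS) : Prop :=
  φ 0 0 = 0 ∧ φ 1 0 = 1 ∧ φ 0 1 = 1 ∧ φ 2 0 = 0 ∧ φ 1 1 = 0 ∧ φ 0 2 = 0

/-- The weighted norm `‖f‖_ρ = Σ_{j,k} |f_{j,k}| ρ^{j+k} ∈ [0,∞]`. -/
def wnorm (ρ : ℝ) (f : FPS) : ENNReal :=
  ∑' p : ℕ × ℕ, ENNReal.ofReal (‖f p.1 p.2‖ * ρ ^ (p.1 + p.2))

/-- `D(f) = Σ_{n≥1} n f_n (z z̄)^n` for a series in `z z̄`. -/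
def Dop (f : FPS) : FPS := fun j k => if j = k then (j : ℂ) * f j k else 0

/-- `D̄(f − f₀) = Σ_{n≥1} (f_n/n) (z z̄)^n` for a series in `z z̄`. -/
def Dbar (f : FPS) : FPS := fun j k => if j = k ∧ j ≠ 0 then f j k / (j : ℂ) else 0

/-- The constant part `f₀` of a series. -/
def constPart (f : FPS) : FPS := fun j k => if j = 0 ∧ k = 0 then f 0 0 else 0

/-- `ξ₀ = ((λ⁻¹+1)z + (λ+1)z̄)/2`. -/
def xi0 (l : ℂ) : FPS := fun a b =>
  if a = 1 ∧ b = 0 then (l⁻¹ + 1) / 2 else if a = 0 ∧ b = 1 then (l + 1) / 2 else 0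

/-! Put `F = S_q(φ⁻, φ)`. By the chain rule, and since `∂₁S_q(φ⁻, φ) = (∂₁S_q(φ, φ⁺))⁻` and
`(φ⁻)_z = λ⁻¹ (φ_z)⁻`,
  `F_z = ∂₂S_q(φ⁻, φ)·φ_z + λ⁻¹ (∂₁S_q(φ, φ⁺)·φ_z)⁻`.
On the coefficient of `z^j z̄^(j+1)` the operation `⁻` multiplies by `λ`, so
`(ℰ·φ_z)_{j,j+1} = (F_z)_{j,j+1} = (j+1) F_{j+1,j+1}`, and in the same way
`(ℰ·φ_z̄)_{j+1,j} = (j+1) F_{j+1,j+1}`. As `F_{0,0} = q(0) = 1`, each of the three conditions says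
that `F` has no diagonal terms besides the constant `1`. -/

open PowerSeries in
def toPS : FPS ≃ₗ[ℂ] PowerSeries (PowerSeries ℂ) where
  toFun f := mk fun j => mk (f j)
  invFun F j k := coeff k (coeff j F)
  map_add' f g := by ext; simp
  map_smul' c f := by ext; simp
  left_inv f := by funext j k; simp
  right_inv F := by ext; simp

lemma coeff_coeff_toPS (f : FPS) (j k : ℕ) :
    PowerSeries.coeff k (PowerSeries.coeff j (toPS f)) = f j k := by
  simp [toPS]

lemma toPS_fmul (f g : FPS) : toPS (fmul f g) = toPS f * toPS g := by
  ext j k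
  rw [PowerSeries.coeff_mul, map_sum, Finset.Nat.sum_antidiagonal_eq_sum_range_succ_mk]
  simp only [coeff_coeff_toPS, fmul, PowerSeries.coeff_mul]
  refine Finset.sum_congr rfl fun a _ => ?_
  simp only [Finset.Nat.sum_antidiagonal_eq_sum_range_succ_mk]

lemma toPS_oneF : toPS oneF = 1 := by
  ext j k
  simp only [coeff_coeff_toPS, oneF, PowerSeries.coeff_one]
  split_ifs <;> simp_all

lemma toPS_fpow (u : FPS) (m : ℕ) : toPS (fpow u m) = toPS u ^ m := by
  induction m with
  | zero => exact toPS_oneF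
  | succ m ih => rw [fpow, toPS_fmul, ih, pow_succ']

lemma toPS_d1 (f : FPS) : toPS (d1 f) = PowerSeries.derivative _ (toPS f) := by
  ext j k
  rw [PowerSeries.coeff_derivative, ← map_natCast PowerSeries.C, ← map_one PowerSeries.C,
    ← map_add, PowerSeries.coeff_mul_C, coeff_coeff_toPS, coeff_coeff_toPS, d1]
  push_cast
  ring

lemma add_fmul (f g h : FPS) : fmul (f + g) h = fmul f h + fmul g h :=
  toPS.injective (by simp only [toPS_fmul, map_add, add_mul])

lemma fmul_smul (c : ℂ) (f g : FPS) : fmul f (c • g) = c • fmul f g :=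
  toPS.injective (by simp only [toPS_fmul, map_smul, mul_smul_comm])

lemma d1_fmul_fpow (u v : FPS) (m n : ℕ) :
    d1 (fmul (fpow u m) (fpow v n)) =
      (m : ℂ) • fmul (fmul (fpow u (m - 1)) (fpow v n)) (d1 u)
        + (n : ℂ) • fmul (fmul (fpow u m) (fpow v (n - 1))) (d1 v) :=
  toPS.injective (by
    simp only [map_add, map_smul, toPS_fmul, toPS_fpow, toPS_d1, Derivation.leibniz,
      Derivation.leibniz_pow, smul_eq_mul, ← Nat.cast_smul_eq_nsmul ℂ]
    rw [mul_smul_comm, mul_smul_comm, add_comm]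
    congr 2 <;> ring)

def OrderAtLeast (d : ℕ) (f : FPS) : Prop := ∀ j k, j + k < d → f j k = 0

lemma OrderAtLeast.fmul {a b : ℕ} {f g : FPS} (hf : OrderAtLeast a f) (hg : OrderAtLeast b g) :
    OrderAtLeast (a + b) (fmul f g) := by
  intro j k hjk
  refine Finset.sum_eq_zero fun a' ha => Finset.sum_eq_zero fun b' hb => ?_
  rw [Finset.mem_range] at ha hb
  by_cases h : a' + b' < a
  · rw [hf a' b' h, zero_mul]
  · rw [hg (j - a') (k - b') (by omega), mul_zero]

lemma orderAtLeast_fpow {u : FPS} (hu : u 0 0 = 0) (m : ℕ) : OrderAtLeast m (fpow u m) := by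
  induction m with
  | zero => exact fun _ _ h => absurd h (Nat.not_lt_zero _)
  | succ m ih =>
    have hu1 : OrderAtLeast 1 u := fun j k h => by
      obtain ⟨rfl, rfl⟩ : j = 0 ∧ k = 0 := by omega
      exact hu
    rw [fpow, add_comm]
    exact hu1.fmul ih

section Substitution

variable {u v : FPS} (hu : u 0 0 = 0) (hv : v 0 0 = 0)
include hu hv

lemma subst2_apply_eq_sum (G : FPS) {j k M N : ℕ} (hM : j + k < M) (hN : j + k < N) :
    subst2 G u v j k =
      ∑ m ∈ Finset.range M, ∑ n ∈ Finset.range N, G m n * fmul (fpow u m) (fpow v n) j k := by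
  have hvanish : ∀ m n, j + k < m + n → G m n * fmul (fpow u m) (fpow v n) j k = 0 :=
    fun m n h => by
      rw [(orderAtLeast_fpow hu m).fmul (orderAtLeast_fpow hv n) j k h, mul_zero]
  have hinner : ∀ m, ∑ n ∈ Finset.range N, G m n * fmul (fpow u m) (fpow v n) j k =
      ∑ n ∈ Finset.range (j + k + 1), G m n * fmul (fpow u m) (fpow v n) j k := fun m =>
    Finset.eventually_constant_sum (fun n hn => hvanish m n (by omega)) (by omega)
  simp only [hinner]
  refine (Finset.eventually_constant_sum (fun m hm => ?_) (by omega)).symm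
  exact Finset.sum_eq_zero fun n _ => hvanish m n (by omega)

lemma fmul_subst2_apply_eq_sum (G w : FPS) {j k M N : ℕ} (hM : j + k < M) (hN : j + k < N) :
    fmul (subst2 G u v) w j k =
      ∑ m ∈ Finset.range M, ∑ n ∈ Finset.range N,
        G m n * fmul (fmul (fpow u m) (fpow v n)) w j k := by
  calc fmul (subst2 G u v) w j k
      = ∑ a ∈ Finset.range (j + 1), ∑ b ∈ Finset.range (k + 1),
          (∑ m ∈ Finset.range M, ∑ n ∈ Finset.range N,
            G m n * fmul (fpow u m) (fpow v n) a b) * w (j - a) (k - b) := by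
        refine Finset.sum_congr rfl fun a ha => Finset.sum_congr rfl fun b hb => ?_
        rw [Finset.mem_range] at ha hb
        rw [subst2_apply_eq_sum hu hv G (j := a) (k := b) (M := M) (N := N) (by omega) (by omega)]
    _ = _ := by
        have hfmul : ∀ f : FPS, fmul f w j k = ∑ a ∈ Finset.range (j + 1),
            ∑ b ∈ Finset.range (k + 1), f a b * w (j - a) (k - b) := fun _ => rfl
        simp only [hfmul, Finset.sum_mul, Finset.mul_sum, mul_assoc,
          ← Finset.sum_product' (Finset.range (j + 1)), ← Finset.sum_product' (Finset.range M)]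
        exact Finset.sum_comm

end Substitution

lemma sum_range_succ_mul_natCast_mul_pred (g X : ℕ → ℂ) (K : ℕ) :
    ∑ m ∈ Finset.range (K + 1), g m * ((m : ℂ) * X (m - 1)) =
      ∑ m ∈ Finset.range K, ((m + 1 : ℕ) : ℂ) * g (m + 1) * X m := by
  rw [Finset.sum_range_succ']
  simp only [Nat.cast_zero, zero_mul, mul_zero, add_zero, Nat.add_sub_cancel]
  exact Finset.sum_congr rfl fun m _ => by push_cast; ring

lemma d1_subst2 {u v : FPS} (hu : u 0 0 = 0) (hv : v 0 0 = 0) (G : FPS) :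
    d1 (subst2 G u v) = fmul (subst2 (d1 G) u v) (d1 u) + fmul (subst2 (d2 G) u v) (d1 v) := by
  funext j k
  have hd1 : ∀ f : FPS, d1 f j k = ((j + 1 : ℕ) : ℂ) * f (j + 1) k := fun _ => rfl
  set K := j + k + 1
  calc d1 (subst2 G u v) j k
      = ∑ m ∈ Finset.range (K + 1), ∑ n ∈ Finset.range (K + 1),
          G m n * d1 (fmul (fpow u m) (fpow v n)) j k := by
        rw [hd1, subst2_apply_eq_sum hu hv G (M := K + 1) (N := K + 1) (by omega) (by omega)]
        simp only [Finset.mul_sum, hd1, mul_left_comm]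
    _ = ∑ m ∈ Finset.range (K + 1), ∑ n ∈ Finset.range (K + 1),
          G m n * ((m : ℂ) * fmul (fmul (fpow u (m - 1)) (fpow v n)) (d1 u) j k)
        + ∑ m ∈ Finset.range (K + 1), ∑ n ∈ Finset.range (K + 1),
          G m n * ((n : ℂ) * fmul (fmul (fpow u m) (fpow v (n - 1))) (d1 v) j k) := by
        simp only [d1_fmul_fpow, Pi.add_apply, Pi.smul_apply, smul_eq_mul, mul_add,
          Finset.sum_add_distrib]
    _ = _ := by
        -- the boxes only need to exceed `j + k`; the smaller side absorbs the index shift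
        rw [Pi.add_apply, Pi.add_apply,
          fmul_subst2_apply_eq_sum hu hv _ _ (M := K) (N := K + 1) (by omega) (by omega),
          fmul_subst2_apply_eq_sum hu hv _ _ (M := K + 1) (N := K) (by omega) (by omega),
          Finset.sum_comm (s := Finset.range (K + 1)), Finset.sum_comm (s := Finset.range K)]
        congr 1
        · exact Finset.sum_congr rfl fun n _ => sum_range_succ_mul_natCast_mul_pred (G · n)
            (fun m => fmul (fmul (fpow u m) (fpow v n)) (d1 u) j k) K
        · exact Finset.sum_congr rfl fun m _ => sum_range_succ_mul_natCast_mul_pred (G m ·)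
            (fun n => fmul (fmul (fpow u m) (fpow v n)) (d1 v) j k) K

lemma swapI_fmul (f g : FPS) : swapI (fmul f g) = fmul (swapI f) (swapI g) := by
  funext j k
  simp only [swapI, fmul]
  exact Finset.sum_comm

lemma swapI_fpow (u : FPS) (m : ℕ) : swapI (fpow u m) = fpow (swapI u) m := by
  induction m with
  | zero => funext j k; simp only [swapI, fpow, oneF, and_comm]
  | succ m ih => rw [fpow, fpow, swapI_fmul, ih]

lemma swapI_subst2 (G u v : FPS) : swapI (subst2 G u v) = subst2 G (swapI u) (swapI v) := by
  funext j k
  simp only [swapI, subst2, add_comm k j, ← swapI_fpow, ← swapI_fmul]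

lemma d2_subst2 {u v : FPS} (hu : u 0 0 = 0) (hv : v 0 0 = 0) (G : FPS) :
    d2 (subst2 G u v) = fmul (subst2 (d1 G) u v) (d2 u) + fmul (subst2 (d2 G) u v) (d2 v) := by
  have hswap : d2 (subst2 G u v) = swapI (d1 (subst2 G (swapI u) (swapI v))) := by
    rw [← swapI_subst2]; rfl
  have swapI_add : ∀ f g : FPS, swapI (f + g) = swapI f + swapI g := fun _ _ => rfl
  rw [hswap, d1_subst2 (u := swapI u) (v := swapI v) hu hv]
  simp only [swapI_add, swapI_fmul, swapI_subst2]
  rfl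

section Rotation

variable {l : ℂ}

lemma minus_oneF : minus l oneF = oneF := by
  funext j k
  simp only [minus, oneF]
  split_ifs with h
  · simp [h.1, h.2]
  · rw [mul_zero]

lemma minus_apply_self_succ (f : FPS) (j : ℕ) : minus l f j (j + 1) = l * f j (j + 1) := by
  simp [minus]

lemma minus_apply_succ_self (f : FPS) (j : ℕ) : minus l f (j + 1) j = l⁻¹ * f (j + 1) j := by
  simp [minus]

variable (hl : l ≠ 0)
include hl

lemma minus_fmul (f g : FPS) : minus l (fmul f g) = fmul (minus l f) (minus l g) := by
  funext j k
  simp only [minus, fmul, Finset.mul_sum]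
  refine Finset.sum_congr rfl fun a ha => Finset.sum_congr rfl fun b hb => ?_
  rw [Finset.mem_range] at ha hb
  have hexp : (k : ℤ) - j = ((b : ℤ) - a) + (((k - b : ℕ) : ℤ) - ((j - a : ℕ) : ℤ)) := by omega
  rw [hexp, zpow_add₀ hl]
  ring

lemma minus_fpow (u : FPS) (m : ℕ) : minus l (fpow u m) = fpow (minus l u) m := by
  induction m with
  | zero => exact minus_oneF
  | succ m ih => rw [fpow, fpow, minus_fmul hl, ih]

lemma minus_subst2 (G u v : FPS) :
    minus l (subst2 G u v) = subst2 G (minus l u) (minus l v) := by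
  funext j k
  show l ^ ((k : ℤ) - j) * subst2 G u v j k = _
  simp only [subst2, Finset.mul_sum, ← minus_fpow hl, ← minus_fmul hl]
  exact Finset.sum_congr rfl fun m _ => Finset.sum_congr rfl fun n _ => mul_left_comm _ _ _

lemma minus_plus (f : FPS) : minus l (plus l f) = f := by
  funext j k
  rw [minus, plus, ← mul_assoc, ← zpow_add₀ hl, sub_add_sub_cancel', sub_self, zpow_zero, one_mul]

lemma d1_minus (f : FPS) : d1 (minus l f) = l⁻¹ • minus l (d1 f) := by
  funext j k
  simp only [d1, minus, Pi.smul_apply, smul_eq_mul]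
  rw [show (k : ℤ) - ((j + 1 : ℕ) : ℤ) = ((k : ℤ) - j) + (-1) by push_cast; ring,
    zpow_add₀ hl, zpow_neg_one]
  ring

lemma d2_minus (f : FPS) : d2 (minus l f) = l • minus l (d2 f) := by
  funext j k
  simp only [d2, minus, Pi.smul_apply, smul_eq_mul]
  rw [show ((k + 1 : ℕ) : ℤ) - (j : ℤ) = ((k : ℤ) - j) + 1 by push_cast; ring,
    zpow_add₀ hl, zpow_one]
  ring

variable {φ : FPS} (hφ : φ 0 0 = 0)
include hφ

lemma d1_subst2_minus_self (G : FPS) :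
    d1 (subst2 G (minus l φ) φ) = fmul (subst2 (d2 G) (minus l φ) φ) (d1 φ)
      + l⁻¹ • minus l (fmul (subst2 (d1 G) φ (plus l φ)) (d1 φ)) := by
  have hφ' : minus l φ 0 0 = 0 := by simp [minus, hφ]
  rw [d1_subst2 hφ' hφ, add_comm, d1_minus hl, fmul_smul, minus_fmul hl, minus_subst2 hl,
    minus_plus hl]

lemma d2_subst2_minus_self (G : FPS) :
    d2 (subst2 G (minus l φ) φ) = fmul (subst2 (d2 G) (minus l φ) φ) (d2 φ)
      + l • minus l (fmul (subst2 (d1 G) φ (plus l φ)) (d2 φ)) := by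
  have hφ' : minus l φ 0 0 = 0 := by simp [minus, hφ]
  rw [d2_subst2 hφ' hφ, add_comm, d2_minus hl, fmul_smul, minus_fmul hl, minus_subst2 hl,
    minus_plus hl]

lemma fmul_Err_d1_apply_self_succ (q : OPS) (j : ℕ) :
    fmul (Err l q φ) (d1 φ) j (j + 1) =
      ((j + 1 : ℕ) : ℂ) * subst2 (Sq q) (minus l φ) φ (j + 1) (j + 1) := by
  have h := congrFun (congrFun (d1_subst2_minus_self hl hφ (Sq q)) j) (j + 1)
  simp only [Pi.add_apply, Pi.smul_apply, smul_eq_mul, minus_apply_self_succ,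
    inv_mul_cancel_left₀ hl] at h
  rw [Err, add_fmul, Pi.add_apply, Pi.add_apply, ← h]
  rfl

lemma fmul_Err_d2_apply_succ_self (q : OPS) (j : ℕ) :
    fmul (Err l q φ) (d2 φ) (j + 1) j =
      ((j + 1 : ℕ) : ℂ) * subst2 (Sq q) (minus l φ) φ (j + 1) (j + 1) := by
  have h := congrFun (congrFun (d2_subst2_minus_self hl hφ (Sq q)) (j + 1)) j
  simp only [Pi.add_apply, Pi.smul_apply, smul_eq_mul, minus_apply_succ_self,
    mul_inv_cancel_left₀ hl] at h
  rw [Err, add_fmul, Pi.add_apply, Pi.add_apply, ← h]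
  rfl

end Rotation

lemma subst2_apply_zero_zero (G u v : FPS) : subst2 G u v 0 0 = G 0 0 := by
  simp [subst2, fpow, fmul, oneF]

lemma Sq_apply_zero_zero (q : OPS) : Sq q 0 0 = q 0 := by
  simp [Sq, fmul, substOne, fpow, oneF, cosSeries]

lemma Pip_eq_zero_iff (f : FPS) : Pip f = 0 ↔ ∀ j, f j (j + 1) = 0 := by
  refine ⟨fun h j => by simpa [Pip] using congrFun (congrFun h j) (j + 1), fun h => ?_⟩
  funext j k
  simp only [Pip, Pi.zero_apply]
  split_ifs with hk
  exacts [hk ▸ h j, rfl]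

lemma Pim_eq_zero_iff (f : FPS) : Pim f = 0 ↔ ∀ k, f (k + 1) k = 0 := by
  refine ⟨fun h k => by simpa [Pim] using congrFun (congrFun h (k + 1)) k, fun h => ?_⟩
  funext j k
  simp only [Pim, Pi.zero_apply]
  split_ifs with hj
  exacts [hj ▸ h k, rfl]

lemma avg_eq_oneF_iff {f : FPS} (h0 : f 0 0 = 1) :
    avg f = oneF ↔ ∀ j, f (j + 1) (j + 1) = 0 := by
  refine ⟨fun h j => by simpa [avg, oneF] using congrFun (congrFun h (j + 1)) (j + 1),
    fun h => ?_⟩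
  funext j k
  simp only [avg, oneF]
  split_ifs with hjk h00 h00
  · obtain ⟨rfl, rfl⟩ := h00
    exact h0
  · obtain ⟨j, rfl⟩ := Nat.exists_eq_succ_of_ne_zero (fun hj => h00 ⟨hj, hjk ▸ hj⟩)
    rw [← hjk, h j]
  · exact absurd (h00.1.trans h00.2.symm) hjk
  · rfl

theorem zero_mean_equivalence_general
    (l : ℂ) (hl : ‖l‖ = 1)
    (q : OPS) (hq0 : q 0 = 1) (φ : FPS) (hφ : normalized φ) :
    (Pip (fmul (Err l q φ) (d1 φ)) = 0 ↔ avg (subst2 (Sq q) (minus l φ) φ) = oneF) ∧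
    (avg (subst2 (Sq q) (minus l φ) φ) = oneF ↔ Pim (fmul (Err l q φ) (d2 φ)) = 0) := by
  have hl0 : l ≠ 0 := norm_ne_zero_iff.mp (hl ▸ one_ne_zero)
  have hF0 : subst2 (Sq q) (minus l φ) φ 0 0 = 1 := by
    rw [subst2_apply_zero_zero, Sq_apply_zero_zero, hq0]
  rw [Pip_eq_zero_iff, Pim_eq_zero_iff, avg_eq_oneF_iff hF0]
  simp only [fmul_Err_d1_apply_self_succ hl0 hφ.1, fmul_Err_d2_apply_succ_self hl0 hφ.1,
    mul_eq_zero, Nat.cast_eq_zero, Nat.add_one_ne_zero, false_or, and_self]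

/-- For `q` with `q(0) = 1` and `φ` normalized and symmetric, the following
are equivalent: `Π₊(ℰ(q,φ)·φ_z) = 0`, `[S_q(φ⁻,φ)] = 1`, `Π(ℰ(q,φ)·φ_z̄) = 0`. -/
theorem zero_mean_equivalence
    (l : ℂ) (hl : ‖l‖ = 1) (hru : ∀ n : ℕ, 0 < n → l ^ n ≠ 1)
    (q : OPS) (hq0 : q 0 = 1) (φ : FPS) (hφ : normalized φ) (hsym : swapI φ = φ) :
    (Pip (fmul (Err l q φ) (d1 φ)) = 0 ↔ avg (subst2 (Sq q) (minus l φ) φ) = oneF) ∧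
    (avg (subst2 (Sq q) (minus l φ) φ) = oneF ↔ Pim (fmul (Err l q φ) (d2 φ)) = 0) :=
  zero_mean_equivalence_general l hl q hq0 φ hφ

end Treschev

end
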